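/- arXiv:1211.1724 — 3 statements merged into one kernel-verified Lean document; each statement's English description precedes it below -/
import Mathlib

section
/- For unit vectors u, v ∈ ℂ^N, the maximum over all choices of u, v of min_{1≤n≤N} Re(\overline{u_n} v_n) equals 1/N, attained when u_n = v_n = 1/√N for all n. -/
open scoped ComplexConjugate

/-! The minimum of the overlaps `Re(conj uₙ vₙ)` is at most their average, and by AM-GM
`Re(conj uₙ vₙ) ≤ |uₙ| |vₙ| ≤ (|uₙ|² + |vₙ|²) / 2`, so the overlaps of two unit vectors sum to at
most `1`. The uniform vector `uₙ = vₙ = 1 / √N` makes every overlap equal to `1 / N`. -/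

namespace Complex

theorem re_conj_mul_le_add_sq_div_two (z w : ℂ) : (conj z * w).re ≤ (‖z‖ ^ 2 + ‖w‖ ^ 2) / 2 :=
  calc (conj z * w).re ≤ ‖conj z * w‖ := re_le_norm _
    _ = ‖z‖ * ‖w‖ := by rw [norm_mul, norm_conj]
    _ ≤ (‖z‖ ^ 2 + ‖w‖ ^ 2) / 2 := by nlinarith [sq_nonneg (‖z‖ - ‖w‖)]

theorem re_conj_ofReal_mul_self (x : ℝ) : (conj (x : ℂ) * x).re = x * x := by
  rw [conj_ofReal, ← ofReal_mul, ofReal_re]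

end Complex

section

variable {ι : Type*} [Fintype ι]

theorem sum_re_conj_mul_le_one {u v : ι → ℂ} (hu : ∑ n, ‖u n‖ ^ 2 = 1)
    (hv : ∑ n, ‖v n‖ ^ 2 = 1) : ∑ n, (conj (u n) * v n).re ≤ 1 :=
  calc ∑ n, (conj (u n) * v n).re ≤ ∑ n, (‖u n‖ ^ 2 + ‖v n‖ ^ 2) / 2 :=
        Finset.sum_le_sum fun n _ => Complex.re_conj_mul_le_add_sq_div_two _ _
    _ = 1 := by rw [← Finset.sum_div, Finset.sum_add_distrib, hu, hv]; norm_num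

theorem iInf_re_conj_mul_le_inv_card [Nonempty ι] {u v : ι → ℂ} (hu : ∑ n, ‖u n‖ ^ 2 = 1)
    (hv : ∑ n, ‖v n‖ ^ 2 = 1) : ⨅ n, (conj (u n) * v n).re ≤ 1 / Fintype.card ι := by
  have hcard : (0 : ℝ) < Fintype.card ι := by exact_mod_cast Fintype.card_pos
  have hmean : Fintype.card ι • ⨅ n, (conj (u n) * v n).re ≤ ∑ n, (conj (u n) * v n).re :=
    Finset.card_nsmul_le_sum _ _ _ fun n _ => ciInf_le (Finite.bddBelow_range _) n
  rw [nsmul_eq_mul] at hmean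
  rw [le_div_iff₀ hcard]
  linarith [sum_re_conj_mul_le_one hu hv]

theorem sum_norm_sq_inv_sqrt_card [Nonempty ι] :
    ∑ _n : ι, ‖((1 / Real.sqrt (Fintype.card ι) : ℝ) : ℂ)‖ ^ 2 = 1 := by
  have hcard : (0 : ℝ) < Fintype.card ι := by exact_mod_cast Fintype.card_pos
  rw [Finset.sum_const, Finset.card_univ, nsmul_eq_mul, Complex.norm_real, Real.norm_eq_abs,
    sq_abs, div_pow, Real.sq_sqrt hcard.le]
  field_simp

end

theorem stmt6 (N : ℕ) (hN : 0 < N) :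
    IsGreatest
      {m : ℝ | ∃ u v : Fin N → ℂ,
        (∑ n, ‖u n‖ ^ 2 = 1) ∧ (∑ n, ‖v n‖ ^ 2 = 1) ∧
        m = ⨅ n, (conj (u n) * v n).re}
      (1 / N) ∧
    (⨅ n : Fin N,
        (conj ((fun _ : Fin N => ((1 / Real.sqrt N : ℝ) : ℂ)) n) *
          ((fun _ : Fin N => ((1 / Real.sqrt N : ℝ) : ℂ)) n)).re) = 1 / N := by
  have : Nonempty (Fin N) := Fin.pos_iff_nonempty.mp hN
  have huniform : ⨅ _n : Fin N, (conj ((1 / Real.sqrt N : ℝ) : ℂ) * ((1 / Real.sqrt N : ℝ) : ℂ)).re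
      = 1 / N := by
    rw [ciInf_const, Complex.re_conj_ofReal_mul_self, div_mul_div_comm, one_mul,
      Real.mul_self_sqrt (Nat.cast_nonneg N)]
  have hunit := sum_norm_sq_inv_sqrt_card (ι := Fin N)
  rw [Fintype.card_fin] at hunit
  refine ⟨⟨⟨_, _, hunit, hunit, huniform.symm⟩, ?_⟩, huniform⟩
  rintro m ⟨u, v, hu, hv, rfl⟩
  simpa using iInf_re_conj_mul_le_inv_card hu hv
end

section
/- The speedup factor s(N) = 2·arccos(1/√N) / arccos(1/N), defined for real N ≥ 2, is strictly monotonically increasing in N. -/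
/-!
Put `t = arccos (1 / √N)`, which increases from `π / 4` towards `π / 2` as `N` grows. Since
`cos² t = 1 / N`, the speedup is `2 t / A t` with `A t = arccos (cos² t)`. Now `A 0 = 0` and
`A' t = 2 cos t / √(1 + cos² t)` decreases on `(0, π / 2)`, so `A` is strictly concave on
`[0, π / 2]` and its secant slope `A t / t` from the origin strictly decreases.
-/

open Real Set

lemma strictMonoOn_div_sqrt_one_add_sq :
    StrictMonoOn (fun x : ℝ => x / √(1 + x ^ 2)) (Ici 0) := by
  intro a (ha : 0 ≤ a) b (hb : 0 ≤ b) hab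
  have hpa : 0 < √(1 + a ^ 2) := by positivity
  have hpb : 0 < √(1 + b ^ 2) := by positivity
  rw [div_lt_div_iff₀ hpa hpb]
  apply lt_of_pow_lt_pow_left₀ 2 (by positivity)
  rw [mul_pow, mul_pow, sq_sqrt (by positivity), sq_sqrt (by positivity)]
  nlinarith

lemma hasDerivAt_arccos_cos_sq {t : ℝ} (ht : t ∈ Ioo 0 (π / 2)) :
    HasDerivAt (fun t => arccos (cos t ^ 2)) (2 * (cos t / √(1 + cos t ^ 2))) t := by
  have hc : 0 < cos t := cos_pos_of_mem_Ioo ⟨by linarith [ht.1, pi_pos], ht.2⟩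
  have hs : 0 < sin t := sin_pos_of_pos_of_lt_pi ht.1 (by linarith [ht.2, pi_pos])
  have hc1 : cos t ^ 2 < 1 := by nlinarith [sin_sq_add_cos_sq t]
  have hd := (hasDerivAt_arccos (x := cos t ^ 2) (by nlinarith) hc1.ne).comp (h₂ := arccos) t
    ((hasDerivAt_cos t).fun_pow 2)
  refine hd.congr_deriv ?_
  -- `1 - cos⁴ t = sin² t (1 + cos² t)` cancels the factor `sin t` of the chain rule
  have hfac : 1 - (cos t ^ 2) ^ 2 = sin t ^ 2 * (1 + cos t ^ 2) := by
    nlinarith [sin_sq_add_cos_sq t]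
  rw [hfac, sqrt_mul (by positivity), sqrt_sq hs.le]
  have : 0 < √(1 + cos t ^ 2) := by positivity
  field_simp
  ring

lemma strictConcaveOn_arccos_cos_sq :
    StrictConcaveOn ℝ (Icc 0 (π / 2)) (fun t => arccos (cos t ^ 2)) := by
  refine StrictAntiOn.strictConcaveOn_of_deriv (convex_Icc _ _) (by fun_prop) ?_
  rw [interior_Icc]
  intro x hx y hy hxy
  rw [(hasDerivAt_arccos_cos_sq hx).deriv, (hasDerivAt_arccos_cos_sq hy).deriv]
  have hcos : StrictAntiOn cos (Ioo 0 (π / 2)) :=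
    strictAntiOn_cos.mono (Ioo_subset_Icc_self.trans (Icc_subset_Icc_right (by linarith [pi_pos])))
  have hmaps : MapsTo cos (Ioo 0 (π / 2)) (Ici 0) := fun t ht =>
    (cos_pos_of_mem_Ioo ⟨by linarith [ht.1, pi_pos], ht.2⟩).le
  have := strictMonoOn_div_sqrt_one_add_sq.comp_strictAntiOn hcos hmaps hx hy hxy
  simp only [Function.comp] at this
  linarith

lemma StrictConcaveOn.strictAntiOn_div_self {𝕜 : Type*} [Field 𝕜] [LinearOrder 𝕜]
    [IsStrictOrderedRing 𝕜] {s : Set 𝕜} {f : 𝕜 → 𝕜} (hf : StrictConcaveOn 𝕜 s f) (h0 : 0 ∈ s)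
    (hf0 : f 0 = 0) : StrictAntiOn (fun x => f x / x) (s ∩ Ioi 0) := by
  intro x hx y hy hxy
  simpa [hf0] using hf.secant_strict_mono h0 hx.1 hy.1 hx.2.ne' hy.2.ne' hxy

lemma strictMonoOn_arccos_inv_sqrt : StrictMonoOn (fun x : ℝ => arccos (1 / √x)) (Ici 1) := by
  intro a (ha : 1 ≤ a) b (hb : 1 ≤ b) hab
  have hsa : 1 ≤ √a := one_le_sqrt.2 ha
  have hsb : 1 ≤ √b := one_le_sqrt.2 hb
  apply strictAntiOn_arccos ⟨by linarith [show 0 ≤ 1 / √b by positivity], ?_⟩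
    ⟨by linarith [show 0 ≤ 1 / √a by positivity], ?_⟩
  · gcongr
  · rw [div_le_one (by linarith)]; exact hsb
  · rw [div_le_one (by linarith)]; exact hsa

lemma arccos_inv_sqrt_mem_Ioc {x : ℝ} (hx : 1 < x) : arccos (1 / √x) ∈ Ioc 0 (π / 2) :=
  ⟨arccos_pos.2 ((div_lt_one (by positivity)).2 ((lt_sqrt zero_le_one).2 (by simpa using hx))),
    arccos_le_pi_div_two.2 (by positivity)⟩

lemma cos_arccos_inv_sqrt_sq {x : ℝ} (hx : 1 ≤ x) : cos (arccos (1 / √x)) ^ 2 = 1 / x := by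
  have hs : 1 ≤ √x := one_le_sqrt.2 hx
  rw [cos_arccos (by linarith [show 0 ≤ 1 / √x by positivity]) ((div_le_one (by linarith)).2 hs),
    div_pow, one_pow, sq_sqrt (by linarith)]

theorem stmt9 :
    StrictMonoOn
      (fun N : ℝ => 2 * Real.arccos (1 / Real.sqrt N) / Real.arccos (1 / N))
      (Set.Ici (2 : ℝ)) := by
  intro N₁ (h₁ : 2 ≤ N₁) N₂ (h₂ : 2 ≤ N₂) hN
  have mem : ∀ {N : ℝ}, 2 ≤ N → arccos (1 / √N) ∈ Icc 0 (π / 2) ∩ Ioi 0 := fun hN =>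
    have h := arccos_inv_sqrt_mem_Ioc (by linarith)
    ⟨⟨h.1.le, h.2⟩, h.1⟩
  have hratio := strictConcaveOn_arccos_cos_sq.strictAntiOn_div_self
    ⟨le_rfl, by positivity⟩ (by simp) (mem h₁) (mem h₂)
    (strictMonoOn_arccos_inv_sqrt (by linarith : (1 : ℝ) ≤ N₁) (by linarith : (1 : ℝ) ≤ N₂) hN)
  simp only [cos_arccos_inv_sqrt_sq (by linarith : (1 : ℝ) ≤ N₁),
    cos_arccos_inv_sqrt_sq (by linarith : (1 : ℝ) ≤ N₂)] at hratio
  have hpos : 0 < arccos (1 / N₂) / arccos (1 / √N₂) :=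
    div_pos (arccos_pos.2 ((div_lt_one (by linarith)).2 (by linarith))) (mem h₂).2
  simpa only [div_div_eq_mul_div] using div_lt_div_of_pos_left two_pos hpos hratio
end

section
/- Let H be Hermitian with eigenvalue spread (max eigenvalue minus min eigenvalue) at most 2μ, and let |ψ(t)⟩ = e^{−iHt}|ψ(0)⟩. Then the Fubini–Study angle θ(t) = arccos(|⟨ψ(0)|ψ(t)⟩|) satisfies θ(t) ≤ μt for all t ≥ 0; consequently the minimum time to transform |ψ(0)⟩ into a state at angle θ is at least θ/μ. -/
/-!
In an eigenbasis of `H` the survival amplitude `⟨ψ₀|e^{-iHt}|ψ₀⟩` is a convex combination of the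
phases `e^{-iλⱼt}`. After multiplying by the global phase `e^{ict}`, `c` the midpoint of the
spectrum, every phase lies within angle `μt` of `1`, so for `μt ≤ π` the real part, and hence the
modulus, of the amplitude is at least `cos (μt)`; for `μt > π` the bound `arccos ≤ π` suffices.
-/

open Matrix

theorem abs_sub_midpoint_ciSup_ciInf_le {ι : Type*} [Finite ι] (f : ι → ℝ) (j : ι) :
    |f j - ((⨆ i, f i) + ⨅ i, f i) / 2| ≤ ((⨆ i, f i) - ⨅ i, f i) / 2 := by
  have hsup : f j ≤ ⨆ i, f i := le_ciSup (Finite.bddAbove_range f) j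
  have hinf : ⨅ i, f i ≤ f j := ciInf_le (Finite.bddBelow_range f) j
  rw [abs_le]
  constructor <;> linarith

namespace Complex

theorem cos_le_norm_sum_mul_exp {ι : Type*} {s : Finset ι} {p x : ι → ℝ} {a r : ℝ}
    (hp : ∀ j ∈ s, 0 ≤ p j) (hp_sum : ∑ j ∈ s, p j = 1) (hx : ∀ j ∈ s, |x j - a| ≤ r)
    (hr : r ≤ Real.pi) :
    Real.cos r ≤ ‖∑ j ∈ s, (p j : ℂ) * exp (x j * I)‖ := by
  -- Rotating by `exp (-a I)` puts every phase within `r` of the real axis.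
  have hrot : (exp (-a * I) * ∑ j ∈ s, (p j : ℂ) * exp (x j * I)).re
      = ∑ j ∈ s, p j * Real.cos (x j - a) := by
    rw [Finset.mul_sum, re_sum]
    refine Finset.sum_congr rfl fun j _ => ?_
    rw [mul_left_comm, ← exp_add,
      show -a * I + x j * I = ((x j - a : ℝ) : ℂ) * I by push_cast; ring,
      re_ofReal_mul, exp_ofReal_mul_I_re]
  calc Real.cos r = ∑ j ∈ s, p j * Real.cos r := by rw [← Finset.sum_mul, hp_sum, one_mul]
    _ ≤ ∑ j ∈ s, p j * Real.cos (x j - a) := by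
      refine Finset.sum_le_sum fun j hj => mul_le_mul_of_nonneg_left ?_ (hp j hj)
      rw [← Real.cos_abs (x j - a)]
      exact Real.cos_le_cos_of_nonneg_of_le_pi (abs_nonneg _) hr (hx j hj)
    _ = (exp (-a * I) * ∑ j ∈ s, (p j : ℂ) * exp (x j * I)).re := hrot.symm
    _ ≤ ‖exp (-a * I) * ∑ j ∈ s, (p j : ℂ) * exp (x j * I)‖ := re_le_norm _
    _ = ‖∑ j ∈ s, (p j : ℂ) * exp (x j * I)‖ := by
      rw [norm_mul, show -a * I = ((-a : ℝ) : ℂ) * I by push_cast; ring, norm_exp_ofReal_mul_I,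
        one_mul]

theorem arccos_norm_sum_mul_exp_le {ι : Type*} {s : Finset ι} {p x : ι → ℝ} {a r : ℝ}
    (hp : ∀ j ∈ s, 0 ≤ p j) (hp_sum : ∑ j ∈ s, p j = 1) (hx : ∀ j ∈ s, |x j - a| ≤ r)
    (hr : 0 ≤ r) :
    Real.arccos ‖∑ j ∈ s, (p j : ℂ) * exp (x j * I)‖ ≤ r := by
  rcases le_or_gt r Real.pi with hrπ | hrπ
  · calc Real.arccos ‖∑ j ∈ s, (p j : ℂ) * exp (x j * I)‖ ≤ Real.arccos (Real.cos r) :=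
          Real.antitone_arccos (cos_le_norm_sum_mul_exp hp hp_sum hx hrπ)
      _ = r := Real.arccos_cos hr hrπ
  · exact (Real.arccos_le_pi _).trans hrπ.le

end Complex

variable {n : Type*} [Fintype n] [DecidableEq n] {H : Matrix n n ℂ}

namespace Matrix.IsHermitian

theorem exp_smul_eq (hH : H.IsHermitian) (s : ℂ) :
    NormedSpace.exp (s • H) = (hH.eigenvectorUnitary : Matrix n n ℂ) *
      diagonal (fun j => Complex.exp (s * hH.eigenvalues j)) *
      star (hH.eigenvectorUnitary : Matrix n n ℂ) := by
  set U : Matrix n n ℂ := (hH.eigenvectorUnitary : Matrix n n ℂ) with hU_def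
  have hUinv : U⁻¹ = star U := inv_eq_left_inv (Unitary.coe_star_mul_self hH.eigenvectorUnitary)
  have hU : IsUnit U := (Unitary.toUnits hH.eigenvectorUnitary).isUnit
  conv_lhs => rw [hH.spectral_theorem, Unitary.conjStarAlgAut_apply]
  rw [← hU_def, ← hUinv, ← smul_mul_assoc, ← mul_smul_comm, Matrix.exp_conj U _ hU,
    ← diagonal_smul, Matrix.exp_diagonal]
  congr 3
  funext j
  simp [← Complex.exp_eq_exp_ℂ]

noncomputable def spectralWeight (hH : H.IsHermitian) (v : n → ℂ) (j : n) : ℝ :=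
  Complex.normSq ((star (hH.eigenvectorUnitary : Matrix n n ℂ) *ᵥ v) j)

theorem star_dotProduct_exp_smul_mulVec (hH : H.IsHermitian) (s : ℂ) (v : n → ℂ) :
    star v ⬝ᵥ NormedSpace.exp (s • H) *ᵥ v
      = ∑ j, (hH.spectralWeight v j : ℂ) * Complex.exp (s * hH.eigenvalues j) := by
  set w := star (hH.eigenvectorUnitary : Matrix n n ℂ) *ᵥ v
  have hw : star v ᵥ* (hH.eigenvectorUnitary : Matrix n n ℂ) = star w := by
    rw [star_mulVec, star_eq_conjTranspose, conjTranspose_conjTranspose]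
  rw [hH.exp_smul_eq, ← mulVec_mulVec, ← mulVec_mulVec, dotProduct_mulVec, hw]
  simp only [mulVec_diagonal, dotProduct, Pi.star_apply, spectralWeight, w]
  refine Finset.sum_congr rfl fun j _ => ?_
  rw [Complex.normSq_eq_conj_mul_self, Complex.star_def]
  ring

theorem sum_spectralWeight (hH : H.IsHermitian) (v : n → ℂ) :
    (∑ j, hH.spectralWeight v j : ℂ) = star v ⬝ᵥ v := by
  simpa using (hH.star_dotProduct_exp_smul_mulVec 0 v).symm

end Matrix.IsHermitian

theorem stmt14_general (d : ℕ) (μ : ℝ) (hμ : 0 < μ)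
    (H : Matrix (Fin d) (Fin d) ℂ) (hH : H.IsHermitian)
    (hspread : (⨆ i, hH.eigenvalues i) - (⨅ i, hH.eigenvalues i) ≤ 2 * μ)
    (ψ₀ : Fin d → ℂ) (hψ₀ : star ψ₀ ⬝ᵥ ψ₀ = 1)
    (ψ : ℝ → (Fin d → ℂ))
    (hψ : ∀ t : ℝ, ψ t = (NormedSpace.exp ((-Complex.I * (t : ℂ)) • H)).mulVec ψ₀) :
    (∀ t : ℝ, 0 ≤ t → Real.arccos (‖star ψ₀ ⬝ᵥ ψ t‖) ≤ μ * t) ∧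
    (∀ t : ℝ, 0 ≤ t → Real.arccos (‖star ψ₀ ⬝ᵥ ψ t‖) / μ ≤ t) := by
  set c := ((⨆ i, hH.eigenvalues i) + ⨅ i, hH.eigenvalues i) / 2
  have hweight_sum : ∑ j, hH.spectralWeight ψ₀ j = 1 := by
    exact_mod_cast (hH.sum_spectralWeight ψ₀).trans hψ₀
  have hangle : ∀ t : ℝ, 0 ≤ t → Real.arccos (‖star ψ₀ ⬝ᵥ ψ t‖) ≤ μ * t := by
    intro t ht
    have hphase : ∀ j, -Complex.I * t * hH.eigenvalues j
        = ((-(t * hH.eigenvalues j) : ℝ) : ℂ) * Complex.I := fun j => by push_cast; ring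
    rw [hψ, hH.star_dotProduct_exp_smul_mulVec]
    simp only [hphase]
    refine Complex.arccos_norm_sum_mul_exp_le (a := -(t * c)) (fun j _ => Complex.normSq_nonneg _)
      hweight_sum (fun j _ => ?_) (by positivity)
    calc |-(t * hH.eigenvalues j) - -(t * c)| = t * |hH.eigenvalues j - c| := by
          rw [show -(t * hH.eigenvalues j) - -(t * c) = -(t * (hH.eigenvalues j - c)) by ring,
            abs_neg, abs_mul, abs_of_nonneg ht]
      _ ≤ t * μ := by
          gcongr
          linarith [abs_sub_midpoint_ciSup_ciInf_le hH.eigenvalues j]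
      _ = μ * t := mul_comm _ _
  exact ⟨hangle, fun t ht => (div_le_iff₀ hμ).2 (by linarith [hangle t ht])⟩

theorem stmt14 (d : ℕ) (hd : 0 < d) (μ : ℝ) (hμ : 0 < μ)
    (H : Matrix (Fin d) (Fin d) ℂ) (hH : H.IsHermitian)
    (hspread : (⨆ i, hH.eigenvalues i) - (⨅ i, hH.eigenvalues i) ≤ 2 * μ)
    (ψ₀ : Fin d → ℂ) (hψ₀ : star ψ₀ ⬝ᵥ ψ₀ = 1)
    (ψ : ℝ → (Fin d → ℂ))
    (hψ : ∀ t : ℝ, ψ t = (NormedSpace.exp ((-Complex.I * (t : ℂ)) • H)).mulVec ψ₀) :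
    (∀ t : ℝ, 0 ≤ t → Real.arccos (‖star ψ₀ ⬝ᵥ ψ t‖) ≤ μ * t) ∧
    (∀ t : ℝ, 0 ≤ t → Real.arccos (‖star ψ₀ ⬝ᵥ ψ t‖) / μ ≤ t) :=
  stmt14_general d μ hμ H hH hspread ψ₀ hψ₀ ψ hψ
end
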